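/- arXiv:2105.05583 — 3 statements merged into one kernel-verified Lean document; each statement's English description precedes it below -/
import Mathlib

section
/- Let R be a partially ordered commutative ring, N a nonnegative integer, and alpha_1,...,alpha_N, beta_1,...,beta_N, C nonnegative elements of R. Define the sequence (a_n)_{n>=0} by the generating-function identity sum_n a_n t^n = C * prod_{i=1}^N (1 + alpha_i t)/(1 - beta_i t) in R[[t]]. Then the infinite Toeplitz matrix T(a)_{ij} = a_{i-j} (with a_m = 0 for m < 0) is totally positive. -/
/-- A minor of an infinite matrix: the determinant of the square submatrix with
rows `r 0 < r 1 < ⋯` and columns `c 0 < c 1 < ⋯`. -/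
noncomputable def minor {R : Type*} [CommRing R] (A : ℕ → ℕ → R) {k : ℕ}
    (r c : Fin k → ℕ) : R :=
  (Matrix.of fun i j => A (r i) (c j)).det

/-- The infinite Toeplitz matrix of a sequence `a`:
`T(a)_{ij} = a_{i-j}`, with `a_m = 0` for `m < 0`. -/
def toeplitz {R : Type*} (a : ℕ → R) [Zero R] : ℕ → ℕ → R := fun i j =>
  if j ≤ i then a (i - j) else 0

/-!
Write `T(f)` for the Toeplitz matrix of the coefficients of a power series `f`; its column `m` is
`X ^ m * f`. Multiplying `f` by `1 + α X` replaces column `m` by column `m` plus `α` times column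
`m + 1`. Expanding a minor multilinearly in its columns gives a nonnegative combination of minors
of `T(f)` with weakly increasing column indices, each of which is nonnegative or has two equal
columns.

Dividing `f` by `1 - β X` replaces row `n` by `∑_{l ≤ n} β ^ (n - l)` times row `l`, a sum with
overlapping ranges for different rows. In a minor with rows `r₀ < r₁ < ⋯`, first subtract
`β ^ (rᵢ - rᵢ₋₁)` times row `rᵢ₋₁` from row `rᵢ`; afterwards row `rᵢ` only involves rows
`l ∈ (rᵢ₋₁, rᵢ]`, so every term of the multilinear expansion is a minor with strictly increasing
rows.

Starting from the diagonal matrix `T(C₀)`, the two steps give the theorem.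
-/

open Finset PowerSeries

section Recurrence

variable {R : Type*} [CommSemiring R] {A B : ℕ → ℕ → R} {β : R}

theorem eq_sum_Ioc_add_of_rec (hB : ∀ n m, B (n + 1) m = A (n + 1) m + β * B n m)
    {p n : ℕ} (hpn : p ≤ n) (m : ℕ) :
    B n m = ∑ l ∈ Ioc p n, β ^ (n - l) * A l m + β ^ (n - p) * B p m := by
  induction n, hpn using Nat.le_induction with
  | base => simp
  | succ n hpn ih =>
    have hshift : ∑ l ∈ Ioc p n, β ^ (n + 1 - l) * A l m
        = β * ∑ l ∈ Ioc p n, β ^ (n - l) * A l m := by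
      rw [mul_sum]
      refine sum_congr rfl fun l hl => ?_
      rw [Nat.succ_sub (mem_Ioc.mp hl).2, pow_succ']
      ring
    rw [hB, ih, sum_Ioc_succ_top hpn, hshift, Nat.sub_self, Nat.succ_sub hpn, pow_succ']
    ring

theorem eq_sum_Icc_of_rec (h0 : ∀ m, B 0 m = A 0 m)
    (hB : ∀ n m, B (n + 1) m = A (n + 1) m + β * B n m) (n m : ℕ) :
    B n m = ∑ l ∈ Icc 0 n, β ^ (n - l) * A l m := by
  rw [eq_sum_Ioc_add_of_rec hB (Nat.zero_le n), Icc_eq_cons_Ioc (Nat.zero_le n), sum_cons, h0,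
    add_comm]

end Recurrence

section TotalPositivity

variable {R : Type*} [CommRing R] [PartialOrder R]

def IsTotallyPositive (A : ℕ → ℕ → R) : Prop :=
  ∀ (k : ℕ) (r c : Fin k → ℕ), StrictMono r → StrictMono c → 0 ≤ minor A r c

variable {A : ℕ → ℕ → R}

theorem IsTotallyPositive.flip (hA : IsTotallyPositive A) : IsTotallyPositive (flip A) :=
  fun k r c hr hc => by
    rw [minor, ← Matrix.det_transpose]
    exact hA k c r hc hr

theorem IsTotallyPositive.minor_nonneg_of_monotone (hA : IsTotallyPositive A) {k : ℕ}
    {r c : Fin k → ℕ} (hr : Monotone r) (hc : Monotone c) : 0 ≤ minor A r c := by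
  by_cases hri : Function.Injective r
  · by_cases hci : Function.Injective c
    · exact hA k r c (hr.strictMono_of_injective hri) (hc.strictMono_of_injective hci)
    · obtain ⟨j, j', hjj', hne⟩ := Function.not_injective_iff.mp hci
      rw [minor, Matrix.det_zero_of_column_eq hne fun i => by simp [hjj']]
  · obtain ⟨i, i', hii', hne⟩ := Function.not_injective_iff.mp hri
    rw [minor, Matrix.det_zero_of_row_eq hne (by ext j; simp [hii'])]

theorem isTotallyPositive_diagonal [IsOrderedRing R] {d : ℕ → R} (hd : ∀ n, 0 ≤ d n) :
    IsTotallyPositive (Matrix.diagonal d) := by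
  intro k r c hr hc
  by_cases hrc : r = c
  · subst hrc
    unfold minor
    rw [← Matrix.submatrix, Matrix.submatrix_diagonal _ _ hr.injective,
      Matrix.det_diagonal]
    exact prod_nonneg fun i _ => hd (r i)
  · have hrange : Set.range r ≠ Set.range c := fun h => hrc ((hr.range_inj hc).mp h)
    by_cases hsub : Set.range r ⊆ Set.range c
    · obtain ⟨j, hj⟩ : ∃ j, c j ∉ Set.range r := by
        by_contra! h
        exact hrange (hsub.antisymm (Set.range_subset_iff.mpr h))
      refine (Matrix.det_eq_zero_of_column_eq_zero j fun i => ?_).ge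
      simp only [Matrix.of_apply, Matrix.diagonal_apply]
      exact if_neg fun h => hj ⟨i, h⟩
    · obtain ⟨i, hi⟩ : ∃ i, r i ∉ Set.range c := by
        simpa [Set.range_subset_iff] using hsub
      refine (Matrix.det_eq_zero_of_row_eq_zero i fun j => ?_).ge
      simp only [Matrix.of_apply, Matrix.diagonal_apply]
      exact if_neg fun h => hi ⟨j, h.symm⟩

theorem IsTotallyPositive.det_sum_rows_nonneg [IsOrderedRing R] (hA : IsTotallyPositive A)
    {k : ℕ} (S : Fin k → Finset ℕ) (w : Fin k → ℕ → R) (hw : ∀ i l, 0 ≤ w i l)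
    (hS : ∀ l ∈ Fintype.piFinset S, Monotone l) {c : Fin k → ℕ} (hc : Monotone c) :
    0 ≤ (Matrix.of fun i j => ∑ l ∈ S i, w i l * A l (c j)).det := by
  have hrows : (Matrix.of fun i j => ∑ l ∈ S i, w i l * A l (c j))
      = fun i => ∑ l ∈ S i, fun j => w i l * A l (c j) := by
    ext i j
    simp only [Matrix.of_apply, Finset.sum_apply]
  rw [hrows]
  change 0 ≤ Matrix.detRowAlternating.toMultilinearMap _
  rw [MultilinearMap.map_sum_finset]
  refine sum_nonneg fun l hl => ?_
  have hdet := Matrix.det_mul_column (fun i => w i (l i)) (Matrix.of fun i j => A (l i) (c j))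
  simp only [Matrix.of_apply] at hdet
  change 0 ≤ Matrix.det (Matrix.of fun i j => w i (l i) * A (l i) (c j))
  rw [hdet]
  exact mul_nonneg (prod_nonneg fun i _ => hw i (l i)) (hA.minor_nonneg_of_monotone (hS l hl) hc)

theorem IsTotallyPositive.add_mul_succ_col [IsOrderedRing R] (hA : IsTotallyPositive A)
    {α : R} (hα : 0 ≤ α) : IsTotallyPositive fun i m => A i m + α * A i (m + 1) := by
  intro k r c hr hc
  have hS : ∀ l ∈ Fintype.piFinset fun j => {c j, c j + 1}, Monotone l := by
    intro l hl j j' hjj'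
    simp only [Fintype.mem_piFinset, mem_insert, mem_singleton] at hl
    rcases hjj'.eq_or_lt with rfl | hlt
    · exact le_rfl
    · have := hc hlt
      rcases hl j with h | h <;> rcases hl j' with h' | h' <;> omega
  rw [minor, ← Matrix.det_transpose]
  convert hA.flip.det_sum_rows_nonneg (fun j => {c j, c j + 1})
    (fun j l => if l = c j then 1 else α) (fun _ _ => by split_ifs <;> simp [hα]) hS
    hr.monotone using 2
  ext j i
  simp [Function.flip_def]

theorem IsTotallyPositive.of_rec [IsOrderedRing R] (hA : IsTotallyPositive A) (hβ : 0 ≤ β)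
    (h0 : ∀ m, B 0 m = A 0 m) (hB : ∀ n m, B (n + 1) m = A (n + 1) m + β * B n m) :
    IsTotallyPositive B := by
  rintro (_ | k) r c hr hc
  · simp [minor]
  set S : Fin (k + 1) → Finset ℕ := Fin.cons (Icc 0 (r 0)) fun i => Ioc (r i.castSucc) (r i.succ)
  have hdet : minor B r c = (Matrix.of fun i j => ∑ l ∈ S i, β ^ (r i - l) * A l (c j)).det :=
    Matrix.det_eq_of_forall_row_eq_smul_add_pred (fun i => β ^ (r i.succ - r i.castSucc))
      (fun j => eq_sum_Icc_of_rec h0 hB _ _)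
      (fun i j => eq_sum_Ioc_add_of_rec hB (hr.monotone i.castSucc_lt_succ.le) _)
  have hS : ∀ l ∈ Fintype.piFinset S, Monotone l := by
    intro l hl
    have hle : ∀ i, l i ≤ r i := by
      refine Fin.cases ?_ fun i => ?_
      · simpa [S] using Fintype.mem_piFinset.mp hl 0
      · simpa [S] using (mem_Ioc.mp (Fintype.mem_piFinset.mp hl i.succ)).2
    refine (Fin.strictMono_iff_lt_succ.mpr fun i => ?_).monotone
    have := Fintype.mem_piFinset.mp hl i.succ
    simp only [S, Fin.cons_succ, mem_Ioc] at this
    exact (hle _).trans_lt this.1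
  rw [hdet]
  exact hA.det_sum_rows_nonneg S _ (fun _ _ => pow_nonneg hβ _) hS hc.monotone

end TotalPositivity

section ToeplitzSeries

variable {R : Type*} [CommRing R]

theorem toeplitz_coeff (f : R⟦X⟧) (i m : ℕ) :
    toeplitz (fun n => coeff n f) i m = coeff i (X ^ m * f) :=
  (coeff_X_pow_mul' f m i).symm

theorem toeplitz_coeff_C (c : R) :
    toeplitz (fun n => coeff n (C c)) = Matrix.diagonal fun _ => c := by
  ext i m
  rw [toeplitz_coeff, mul_comm, coeff_C_mul, coeff_X_pow, Matrix.diagonal_apply]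
  split_ifs <;> simp_all

variable [PartialOrder R] [IsOrderedRing R] {f g : R⟦X⟧}

theorem IsTotallyPositive.toeplitz_one_add_mul {α : R} (hα : 0 ≤ α)
    (hf : IsTotallyPositive (toeplitz fun n => coeff n f)) :
    IsTotallyPositive (toeplitz fun n => coeff n ((1 + C α * X) * f)) := by
  convert hf.add_mul_succ_col hα using 1
  ext i m
  simp only [toeplitz_coeff]
  rw [show X ^ m * ((1 + C α * X) * f) = X ^ m * f + C α * (X ^ (m + 1) * f) by ring, map_add,
    coeff_C_mul]

theorem IsTotallyPositive.toeplitz_of_one_sub_mul {β : R} (hβ : 0 ≤ β)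
    (hf : IsTotallyPositive (toeplitz fun n => coeff n f)) (hgf : (1 - C β * X) * g = f) :
    IsTotallyPositive (toeplitz fun n => coeff n g) := by
  have hfg : ∀ m, X ^ m * f = X ^ m * g - C β * (X * (X ^ m * g)) := fun m => by
    rw [← hgf]; ring
  refine hf.of_rec hβ (fun m => ?_) (fun n m => ?_)
  · simp [toeplitz_coeff, hfg]
  · simp only [toeplitz_coeff, hfg, map_sub, coeff_C_mul, coeff_succ_X_mul]
    ring

theorem IsTotallyPositive.toeplitz_prod_one_add_mul {ι : Type*} (s : Finset ι) {α : ι → R}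
    (hα : ∀ i ∈ s, 0 ≤ α i) (hf : IsTotallyPositive (toeplitz fun n => coeff n f)) :
    IsTotallyPositive (toeplitz fun n => coeff n ((∏ i ∈ s, (1 + C (α i) * X)) * f)) := by
  refine prod_induction (fun i => 1 + C (α i) * X)
    (fun p => ∀ f : R⟦X⟧, IsTotallyPositive (toeplitz fun n => coeff n f) →
      IsTotallyPositive (toeplitz fun n => coeff n (p * f)))
    (fun p q hp hq f hf => by rw [mul_assoc]; exact hp _ (hq f hf))
    (fun f hf => by rwa [one_mul]) (fun i hi _ hf => by exact hf.toeplitz_one_add_mul (hα i hi))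
    f hf

theorem IsTotallyPositive.toeplitz_of_prod_one_sub_mul {ι : Type*} (s : Finset ι) {β : ι → R}
    (hβ : ∀ i ∈ s, 0 ≤ β i) (hf : IsTotallyPositive (toeplitz fun n => coeff n f))
    (hgf : (∏ i ∈ s, (1 - C (β i) * X)) * g = f) :
    IsTotallyPositive (toeplitz fun n => coeff n g) := by
  refine prod_induction (fun i => 1 - C (β i) * X)
    (fun p => ∀ g : R⟦X⟧, IsTotallyPositive (toeplitz fun n => coeff n (p * g)) →
      IsTotallyPositive (toeplitz fun n => coeff n g))
    (fun p q hp hq g hg => hq g (hp _ (by rwa [← mul_assoc])))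
    (fun g hg => by rwa [one_mul] at hg)
    (fun i hi g hg => hg.toeplitz_of_one_sub_mul (hβ i hi) rfl) g (hgf ▸ hf)

end ToeplitzSeries

open PowerSeries in
/-- Sufficient condition for Toeplitz-total positivity: if the generating
function of a sequence `a` in a partially ordered commutative ring `R` is
`C₀ ∏_{i=1}^N (1 + αᵢ t)/(1 - βᵢ t)` with `αᵢ, βᵢ, C₀` nonnegative, then the
Toeplitz matrix of `a` is totally positive (all its minors are nonnegative).
The generating-function identity is stated multiplied through by the
denominators `1 - βᵢ t` in `R[[t]]`. -/
theorem toeplitz_TP_of_rational_gf {R : Type*} [CommRing R] [PartialOrder R] [IsOrderedRing R] (N : ℕ)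
    (α β : ℕ → R) (C₀ : R) (hα : ∀ i, 0 ≤ α i) (hβ : ∀ i, 0 ≤ β i)
    (hC : 0 ≤ C₀) (a : ℕ → R)
    (ha : (∏ i ∈ Finset.range N, (1 - PowerSeries.C (β i) * PowerSeries.X))
            * PowerSeries.mk a
          = PowerSeries.C C₀
            * ∏ i ∈ Finset.range N, (1 + PowerSeries.C (α i) * PowerSeries.X)) :
    ∀ (k : ℕ) (r c : Fin k → ℕ), StrictMono r → StrictMono c →
      0 ≤ minor (toeplitz a) r c := by
  show IsTotallyPositive (toeplitz a)
  have hC₀ : IsTotallyPositive (toeplitz fun n => coeff n (C C₀)) := by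
    rw [toeplitz_coeff_C]
    exact isTotallyPositive_diagonal fun _ => hC
  have hnum := hC₀.toeplitz_prod_one_add_mul (range N) fun i _ => hα i
  rw [mul_comm, ← ha] at hnum
  simpa only [coeff_mk] using hnum.toeplitz_of_prod_one_sub_mul (range N) (fun i _ => hβ i) rfl
end

section
/- Let P be a row-finite or column-finite matrix over a commutative ring R. Then the infinite Hankel matrix H with entries H_{n,n'} = (P^{n+n'})_{00} factorizes as H = O(P) * O(P^T)^T, where O(Q)_{nk} = (Q^n)_{0k}. Consequently, if P is totally positive of order r over a partially ordered commutative ring, then so is H. -/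
/-!
Under row- or column-finiteness every `finsum` involved is a finite sum, so the product of infinite
matrices is associative and `(P^(a+b))_{ij} = ∑_t (P^a)_{it} (P^b)_{tj}`. Taking `i = j = 0` and
using `(P^b)_{t0} = ((Pᵀ)^b)_{0t}` gives `H = O(P) O(Pᵀ)ᵀ`.

By the Cauchy–Binet formula a product of matrices that are totally positive of order `ρ` is
again so, hence it suffices that `O(Q)` is. Row `0` of `O(Q)` is the unit vector `e₀`, and
deleting it leaves `O(Q) Q`. So a minor of `O(Q)` either contains row `0`, and Laplace expansion
along it leaves a smaller minor of `O(Q)` (or zero), or by Cauchy–Binet it is a sum of products of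
minors of `O(Q)` with all row indices lowered by one and minors of `Q`.
-/

/-- Product of infinite matrices, defined via `finsum` (a genuine finite sum
whenever the left factor is row-finite or the right factor is column-finite). -/
noncomputable def fMul {R : Type*} [CommRing R] (P Q : ℕ → ℕ → R) : ℕ → ℕ → R :=
  fun i k => ∑ᶠ j, P i j * Q j k

/-- Powers of an infinite matrix. -/
noncomputable def fPow {R : Type*} [CommRing R] (P : ℕ → ℕ → R) : ℕ → ℕ → ℕ → R
  | 0 => fun i j => if i = j then 1 else 0
  | n + 1 => fMul (fPow P n) P

/-- The output matrix of a production matrix `P`: `O(P)_{nk} = (P^n)_{0k}`. -/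
noncomputable def outputMat {R : Type*} [CommRing R] (P : ℕ → ℕ → R) : ℕ → ℕ → R :=
  fun n k => fPow P n 0 k

/-- `P` is row-finite or column-finite. -/
def RowOrColFinite {R : Type*} [Zero R] (P : ℕ → ℕ → R) : Prop :=
  (∀ i, (Function.support (P i)).Finite) ∨ (∀ j, (Function.support fun i => P i j).Finite)

open Function Finset Matrix

section FinsumAssoc

variable {α β R : Type*} [NonUnitalSemiring R]

theorem finsum_mul_finsum_assoc_of_finite_left (A : α → R) (B : α → β → R) (C : β → R)
    (hA : (support A).Finite) (hB : ∀ u, (support (B u)).Finite) :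
    ∑ᶠ t, (∑ᶠ u, A u * B u t) * C t = ∑ᶠ u, A u * ∑ᶠ t, B u t * C t := by
  have hsupp (g : α → R) : support (fun u => A u * g u) ⊆ hA.toFinset := by
    intro u hu
    simpa using left_ne_zero_of_mul hu
  calc ∑ᶠ t, (∑ᶠ u, A u * B u t) * C t
      = ∑ᶠ t, ∑ u ∈ hA.toFinset, A u * B u t * C t := by
        refine finsum_congr fun t => ?_
        rw [finsum_eq_sum_of_support_subset _ (hsupp _), Finset.sum_mul]
    _ = ∑ u ∈ hA.toFinset, ∑ᶠ t, A u * B u t * C t :=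
        finsum_sum_comm _ _ fun u _ => (hB u).subset fun t ht => by
          simpa using right_ne_zero_of_mul (left_ne_zero_of_mul ht)
    _ = ∑ᶠ u, A u * ∑ᶠ t, B u t * C t := by
        rw [finsum_eq_sum_of_support_subset _ (hsupp _)]
        refine Finset.sum_congr rfl fun u _ => ?_
        rw [mul_finsum' _ _ ((hB u).subset fun t ht => left_ne_zero_of_mul ht)]
        simp only [mul_assoc]

theorem finsum_mul_finsum_assoc_of_finite_right (A : α → R) (B : α → β → R) (C : β → R)
    (hC : (support C).Finite) (hB : ∀ t, (support fun u => B u t).Finite) :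
    ∑ᶠ t, (∑ᶠ u, A u * B u t) * C t = ∑ᶠ u, A u * ∑ᶠ t, B u t * C t := by
  have hsupp (g : β → R) : support (fun t => g t * C t) ⊆ hC.toFinset := by
    intro t ht
    simpa using right_ne_zero_of_mul ht
  calc ∑ᶠ t, (∑ᶠ u, A u * B u t) * C t
      = ∑ t ∈ hC.toFinset, ∑ᶠ u, A u * (B u t * C t) := by
        rw [finsum_eq_sum_of_support_subset _ (hsupp _)]
        refine Finset.sum_congr rfl fun t _ => ?_
        rw [finsum_mul' _ _ ((hB t).subset fun u hu => right_ne_zero_of_mul hu)]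
        simp only [mul_assoc]
    _ = ∑ᶠ u, ∑ t ∈ hC.toFinset, A u * (B u t * C t) :=
        (finsum_sum_comm _ _ fun t _ => (hB t).subset fun u hu => by
          simpa using left_ne_zero_of_mul (right_ne_zero_of_mul hu)).symm
    _ = ∑ᶠ u, A u * ∑ᶠ t, B u t * C t := by
        refine finsum_congr fun u => ?_
        rw [finsum_eq_sum_of_support_subset _ (hsupp _), Finset.mul_sum]

end FinsumAssoc

section CauchyBinet

variable {R : Type*} [CommRing R] {ι : Type*} {k : ℕ}

theorem det_sum_mul_eq_sum_prod_mul_det [DecidableEq ι] (A : Fin k → ι → R) (B : ι → Fin k → R)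
    (T : Finset ι) :
    (of fun i j => ∑ t ∈ T, A i t * B t j).det
      = ∑ r ∈ Fintype.piFinset fun _ => T, (∏ i, A i (r i)) * (of fun i j => B (r i) j).det := by
  have hrows : (of fun i j => ∑ t ∈ T, A i t * B t j) = fun i => ∑ t ∈ T, A i t • B t := by
    ext i j
    simp [Finset.sum_apply]
  have hsum := (detRowAlternating (R := R) (n := Fin k)).toMultilinearMap.map_sum_finset
    (fun i t => A i t • B t) fun _ => T
  have hsmul := fun r : Fin k → ι =>
    (detRowAlternating (R := R) (n := Fin k)).toMultilinearMap.map_smul_univ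
      (fun i => A i (r i)) fun i => B (r i)
  simp only [AlternatingMap.coe_multilinearMap] at hsum hsmul
  rw [hrows]
  exact hsum.trans (Finset.sum_congr rfl fun r _ => hsmul r)

theorem sum_filter_injective_eq_sum_strictMono_sum_perm {M : Type*} [AddCommMonoid M]
    [LinearOrder ι] (T : Finset ι) (f : (Fin k → ι) → M) :
    ∑ r ∈ (Fintype.piFinset fun _ => T).filter Injective, f r
      = ∑ s ∈ (Fintype.piFinset fun _ => T).filter StrictMono,
          ∑ σ : Equiv.Perm (Fin k), f (s ∘ σ) := by
  rw [← Finset.sum_product (f := fun p : (Fin k → ι) × Equiv.Perm (Fin k) => f (p.1 ∘ p.2))]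
  refine (Finset.sum_nbij' (fun p : (Fin k → ι) × Equiv.Perm (Fin k) => p.1 ∘ p.2)
    (fun r => (r ∘ Tuple.sort r, (Tuple.sort r)⁻¹)) ?_ ?_ ?_ ?_ fun _ _ => rfl).symm
  · rintro ⟨s, σ⟩ hp
    simp only [mem_product, mem_filter, Fintype.mem_piFinset, mem_univ, and_true] at hp ⊢
    exact ⟨fun i => hp.1 _, hp.2.injective.comp σ.injective⟩
  · intro r hr
    simp only [mem_product, mem_filter, Fintype.mem_piFinset, mem_univ, and_true] at hr ⊢
    exact ⟨fun i => hr.1 _, (Tuple.monotone_sort r).strictMono_of_injective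
      (hr.2.comp (Tuple.sort r).injective)⟩
  · rintro ⟨s, σ⟩ hp
    simp only [mem_product, mem_filter, Fintype.mem_piFinset, mem_univ, and_true] at hp
    have hsort : (s ∘ σ) ∘ Tuple.sort (s ∘ σ) = s := by
      rw [Tuple.comp_perm_comp_sort_eq_comp_sort, Tuple.sort_eq_refl_iff_monotone.2 hp.2.monotone]
      rfl
    have hσ : σ * Tuple.sort (s ∘ σ) = 1 :=
      Equiv.ext fun i => hp.2.injective (congrFun hsort i)
    exact Prod.ext hsort (inv_eq_of_mul_eq_one_left hσ)
  · intro r _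
    simp [Function.comp_assoc]

theorem cauchy_binet [LinearOrder ι] (A : Fin k → ι → R) (B : ι → Fin k → R) (T : Finset ι) :
    (of fun i j => ∑ t ∈ T, A i t * B t j).det
      = ∑ s ∈ (Fintype.piFinset fun _ => T).filter StrictMono,
          (of fun i j => A i (s j)).det * (of fun i j => B (s i) j).det := by
  rw [det_sum_mul_eq_sum_prod_mul_det, ← Finset.sum_filter_of_ne (p := Injective),
    sum_filter_injective_eq_sum_strictMono_sum_perm]
  · refine Finset.sum_congr rfl fun s _ => ?_
    have hperm (σ : Equiv.Perm (Fin k)) : (of fun i j => B ((s ∘ σ) i) j).det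
        = Equiv.Perm.sign σ * (of fun i j => B (s i) j).det :=
      det_permute σ (of fun i j => B (s i) j)
    simp_rw [hperm, ← mul_assoc, ← Finset.sum_mul, ← det_transpose (of fun i j => A i (s j)),
      det_apply, Units.smul_def, zsmul_eq_mul]
    simp [mul_comm]
  · intro r _ hr
    by_contra hinj
    obtain ⟨i, j, hrij, hij⟩ : ∃ i j, r i = r j ∧ i ≠ j := by
      simpa [Injective] using hinj
    exact hr (by rw [det_zero_of_row_eq hij (by ext; simp [hrij]), mul_zero])

end CauchyBinet

section InfiniteMatrix

variable {R : Type*} [CommRing R] {P : ℕ → ℕ → R}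

theorem fPow_succ_apply (P : ℕ → ℕ → R) (n i j : ℕ) :
    fPow P (n + 1) i j = ∑ᶠ t, fPow P n i t * P t j := rfl

theorem support_fMul_row_subset (A B : ℕ → ℕ → R) (i : ℕ) :
    support (fMul A B i) ⊆ ⋃ t ∈ support (A i), support (B t) := by
  intro j hj
  obtain ⟨t, ht⟩ := not_forall.1 (mt finsum_eq_zero_of_forall_eq_zero hj)
  exact Set.mem_biUnion (left_ne_zero_of_mul ht) (right_ne_zero_of_mul ht)

theorem support_fMul_col_subset (A B : ℕ → ℕ → R) (j : ℕ) :
    support (fun i => fMul A B i j)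
      ⊆ ⋃ t ∈ support (fun u => B u j), support (fun i => A i t) := by
  intro i hi
  obtain ⟨t, ht⟩ := not_forall.1 (mt finsum_eq_zero_of_forall_eq_zero hi)
  exact Set.mem_biUnion (right_ne_zero_of_mul ht) (left_ne_zero_of_mul ht)

theorem fPow_row_finite (h : ∀ i, (support (P i)).Finite) (n i : ℕ) :
    (support (fPow P n i)).Finite := by
  induction n generalizing i with
  | zero => exact (Set.finite_singleton i).subset fun _ hj => (ite_ne_right_iff.1 hj).1.symm
  | succ n ih => exact ((ih i).biUnion fun t _ => h t).subset (support_fMul_row_subset _ _ i)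

theorem fPow_col_finite (h : ∀ j, (support fun i => P i j).Finite) (n j : ℕ) :
    (support fun i => fPow P n i j).Finite := by
  induction n generalizing j with
  | zero => exact (Set.finite_singleton j).subset fun _ hi => (ite_ne_right_iff.1 hi).1
  | succ n ih => exact ((h j).biUnion fun t _ => ih t).subset (support_fMul_col_subset _ _ j)

theorem fPow_add (hP : RowOrColFinite P) (a b i j : ℕ) :
    fPow P (a + b) i j = ∑ᶠ t, fPow P a i t * fPow P b t j := by
  induction b generalizing j with
  | zero =>
      rw [finsum_eq_single _ j fun t ht => by simp [fPow, ht]]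
      simp [fPow]
  | succ b ih =>
      calc fPow P (a + (b + 1)) i j = ∑ᶠ t, fPow P (a + b) i t * P t j := rfl
        _ = ∑ᶠ t, (∑ᶠ u, fPow P a i u * fPow P b u t) * P t j := by simp_rw [ih]
        _ = ∑ᶠ u, fPow P a i u * fPow P (b + 1) u j := by
            rcases hP with h | h
            · exact finsum_mul_finsum_assoc_of_finite_left _ _ _
                (fPow_row_finite h a i) fun u => fPow_row_finite h b u
            · exact finsum_mul_finsum_assoc_of_finite_right _ _ _ (h j)
                fun t => fPow_col_finite h b t

theorem fPow_one (P : ℕ → ℕ → R) (i j : ℕ) : fPow P 1 i j = P i j := by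
  rw [fPow_succ_apply, finsum_eq_single _ i fun t ht => by simp [fPow, Ne.symm ht]]
  simp [fPow]

theorem fPow_transpose (hP : RowOrColFinite P) (n i j : ℕ) :
    fPow (fun x y => P y x) n i j = fPow P n j i := by
  induction n generalizing i j with
  | zero => exact if_congr eq_comm rfl rfl
  | succ n ih =>
      calc fPow (fun x y => P y x) (n + 1) i j
          = ∑ᶠ t, fPow P 1 j t * fPow P n t i :=
            finsum_congr fun t => by rw [ih, fPow_one, mul_comm]
        _ = fPow P (n + 1) j i := by rw [← fPow_add hP, add_comm]

theorem RowOrColFinite.transpose (hP : RowOrColFinite P) : RowOrColFinite fun i j => P j i :=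
  hP.symm

theorem hankel_eq_fMul_outputMat (hP : RowOrColFinite P) :
    (fun n n' => fPow P (n + n') 0 0)
      = fMul (outputMat P) (fun k n' => outputMat (fun i j => P j i) n' k) := by
  ext n n'
  rw [fPow_add hP]
  exact finsum_congr fun t => congrArg (fPow P n 0 t * ·) (fPow_transpose hP n' 0 t).symm

end InfiniteMatrix

section Minors

variable {R : Type*} [CommRing R] {k : ℕ}

theorem minor_transpose (A : ℕ → ℕ → R) (r c : Fin k → ℕ) :
    minor (fun i j => A j i) r c = minor A c r :=
  det_transpose (of fun i j => A (c i) (r j))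

theorem minor_fMul (A B : ℕ → ℕ → R) (r c : Fin k → ℕ) (T : Finset ℕ)
    (hT : ∀ i j t, A (r i) t * B t (c j) ≠ 0 → t ∈ T) :
    minor (fMul A B) r c
      = ∑ s ∈ (Fintype.piFinset fun _ => T).filter StrictMono, minor A r s * minor B s c := by
  have hsum : (of fun i j => fMul A B (r i) (c j))
      = of fun i j => ∑ t ∈ T, A (r i) t * B t (c j) := by
    ext i j
    exact finsum_eq_sum_of_support_subset _ fun t ht => hT i j t ht
  rw [minor, hsum]
  exact cauchy_binet _ _ T

theorem exists_finset_forall_mul_ne_zero_mem {A B : ℕ → ℕ → R}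
    (hAB : (∀ i, (support (A i)).Finite) ∨ ∀ j, (support fun i => B i j).Finite)
    (r c : Fin k → ℕ) : ∃ T : Finset ℕ, ∀ i j t, A (r i) t * B t (c j) ≠ 0 → t ∈ T := by
  rcases hAB with h | h
  · exact ⟨univ.biUnion fun i => (h (r i)).toFinset, fun i j t ht =>
      mem_biUnion.2 ⟨i, mem_univ _, (h (r i)).mem_toFinset.2 (left_ne_zero_of_mul ht)⟩⟩
  · exact ⟨univ.biUnion fun j => (h (c j)).toFinset, fun i j t ht =>
      mem_biUnion.2 ⟨j, mem_univ _, (h (c j)).mem_toFinset.2 (right_ne_zero_of_mul ht)⟩⟩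

theorem minor_eq_minor_succ_of_row_zero_eq_single (A : ℕ → ℕ → R) (r c : Fin (k + 1) → ℕ)
    (h : ∀ j, A (r 0) (c j) = if j = 0 then 1 else 0) :
    minor A r c = minor A (r ∘ Fin.succ) (c ∘ Fin.succ) := by
  rw [minor, det_succ_row_zero, Fin.sum_univ_succ, sum_eq_zero fun j _ => by simp [h]]
  simp only [of_apply, h, if_true, Fin.val_zero, pow_zero, one_mul, Fin.succAbove_zero, add_zero]
  rfl

end Minors

def TotallyPositive {S : Type*} [CommRing S] [PartialOrder S] (ρ : ℕ∞) (A : ℕ → ℕ → S) : Prop :=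
  ∀ k : ℕ, (k : ℕ∞) ≤ ρ → ∀ r c : Fin k → ℕ, StrictMono r → StrictMono c → 0 ≤ minor A r c

section TotalPositivity

variable {S : Type*} [CommRing S] [PartialOrder S] {k : ℕ} {ρ : ℕ∞}

theorem TotallyPositive.transpose {A : ℕ → ℕ → S} (hA : TotallyPositive ρ A) :
    TotallyPositive ρ fun i j => A j i := fun k hk r c hr hc =>
  (minor_transpose A r c).symm ▸ hA k hk c r hc hr

theorem minor_fMul_nonneg [IsOrderedRing S] {A B : ℕ → ℕ → S}
    (hAB : (∀ i, (support (A i)).Finite) ∨ ∀ j, (support fun i => B i j).Finite)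
    {r c : Fin k → ℕ} (hA : ∀ s, StrictMono s → 0 ≤ minor A r s)
    (hB : ∀ s, StrictMono s → 0 ≤ minor B s c) : 0 ≤ minor (fMul A B) r c := by
  obtain ⟨T, hT⟩ := exists_finset_forall_mul_ne_zero_mem hAB r c
  rw [minor_fMul A B r c T hT]
  exact sum_nonneg fun s hs => mul_nonneg (hA s (mem_filter.1 hs).2) (hB s (mem_filter.1 hs).2)

theorem TotallyPositive.fMul [IsOrderedRing S] {A B : ℕ → ℕ → S} (hA : TotallyPositive ρ A)
    (hB : TotallyPositive ρ B)
    (hAB : (∀ i, (support (A i)).Finite) ∨ ∀ j, (support fun i => B i j).Finite) :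
    TotallyPositive ρ (fMul A B) := fun k hk _ _ hr hc =>
  minor_fMul_nonneg hAB (fun s hs => hA k hk _ s hr hs) fun s hs => hB k hk s _ hs hc

end TotalPositivity

section OutputMatrix

variable {S : Type*} [CommRing S] [PartialOrder S] [IsOrderedRing S] {ρ : ℕ∞} {Q : ℕ → ℕ → S}

theorem TotallyPositive.outputMat (hQ : RowOrColFinite Q) (hTP : TotallyPositive ρ Q) :
    TotallyPositive ρ (outputMat Q) := by
  intro k
  induction k with
  | zero => intro _ r c _ _; simp [minor]
  | succ k ih =>
    intro hk r c hr hc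
    induction hn : r 0 generalizing r c with
    | zero =>
      have hrow (j : Fin (k + 1)) :
          _root_.outputMat Q (r 0) (c j) = if c j = 0 then 1 else 0 := by
        rw [hn]; exact if_congr eq_comm rfl rfl
      by_cases hc0 : c 0 = 0
      · have hcj (j : Fin (k + 1)) : c j = 0 ↔ j = 0 :=
          ⟨fun h => hc.injective (h.trans hc0.symm), fun h => h ▸ hc0⟩
        rw [minor_eq_minor_succ_of_row_zero_eq_single _ r c fun j => by
          rw [hrow]; exact if_congr (hcj j) rfl rfl]
        exact ih (le_trans (by norm_cast; omega) hk) _ _ (hr.comp Fin.strictMono_succ)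
          (hc.comp Fin.strictMono_succ)
      · refine le_of_eq (det_eq_zero_of_row_eq_zero 0 fun j => ?_).symm
        rw [of_apply, hrow, if_neg]
        have := hc.monotone (Fin.zero_le j)
        omega
    | succ n ihn =>
      obtain ⟨r', rfl⟩ : ∃ r' : Fin (k + 1) → ℕ, r = fun i => r' i + 1 :=
        ⟨fun i => r i - 1, funext fun i => by
          dsimp only; have := hr.monotone (Fin.zero_le i); omega⟩
      have hr' : StrictMono r' := fun a b hab => Nat.succ_lt_succ_iff.1 (hr hab)
      show 0 ≤ minor (_root_.fMul (_root_.outputMat Q) Q) r' c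
      exact minor_fMul_nonneg (hQ.imp_left fun h i => fPow_row_finite h i 0)
        (fun s hs => ihn r' s hr' hs (Nat.succ_injective hn)) fun s hs => hTP _ hk s c hs hc

theorem TotallyPositive.hankel (hQ : RowOrColFinite Q) (hTP : TotallyPositive ρ Q) :
    TotallyPositive ρ fun n n' => fPow Q (n + n') 0 0 := by
  rw [hankel_eq_fMul_outputMat hQ]
  exact (hTP.outputMat hQ).fMul (hTP.transpose.outputMat hQ.transpose).transpose
    (hQ.imp (fun h i => fPow_row_finite h i 0) fun h j => fPow_row_finite h j 0)

end OutputMatrix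

/-- (i) For a row-finite or column-finite matrix `P`, the Hankel matrix
`H_{n,n'} = (P^{n+n'})_{00}` factorizes as `H = O(P) ⬝ O(Pᵀ)ᵀ`, i.e.
`(P^{n+n'})_{00} = ∑_k O(P)_{nk} O(Pᵀ)_{n'k}`.
(ii) Consequently, if `Q` is a row-finite or column-finite matrix over a
partially ordered commutative ring that is totally positive of order `ρ`,
then so is the Hankel matrix `((Q^{n+n'})_{00})_{n,n'≥0}`. -/
theorem hankel_factorization_and_TP {R : Type*} [CommRing R]
    {S : Type*} [CommRing S] [PartialOrder S] [IsOrderedRing S]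
    (P : ℕ → ℕ → R) (hP : RowOrColFinite P)
    (Q : ℕ → ℕ → S) (hQ : RowOrColFinite Q) (ρ : ℕ∞)
    (hTP : ∀ (k : ℕ), (k : ℕ∞) ≤ ρ → ∀ (r c : Fin k → ℕ),
      StrictMono r → StrictMono c → 0 ≤ minor Q r c) :
    (∀ n n' : ℕ, fPow P (n + n') 0 0
      = ∑ᶠ k, outputMat P n k * outputMat (fun i j => P j i) n' k)
    ∧ (∀ (k : ℕ), (k : ℕ∞) ≤ ρ → ∀ (r c : Fin k → ℕ),
        StrictMono r → StrictMono c →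
        0 ≤ minor (fun n n' => fPow Q (n + n') 0 0) r c) :=
  ⟨fun n n' => congrFun₂ (hankel_eq_fMul_outputMat hP) n n', TotallyPositive.hankel hQ hTP⟩
end

section
/- Let phi = (phi_i)_{i>=0} and x be indeterminates. Define the lower-Hessenberg matrix P by p_{ij} = (i!/(j-1)!) * phi_{i-j+1} for 1 <= j <= i+1 and p_{ij} = 0 otherwise, and let B_x be the matrix with (B_x)_{nk} = binomial(n,k) x^(n-k). Then B_x^{-1} P B_x = P (I + x * Delta^T), where Delta is the matrix with 1's on the superdiagonal and 0 elsewhere. -/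
open Finset Function

section

variable {R : Type*} [CommRing R]

def RowFinite (A : ℕ → ℕ → R) : Prop := ∀ i, (A i).HasFiniteSupport

theorem fMul_apply_eq_sum {A : ℕ → ℕ → R} {i : ℕ} {s : Finset ℕ} (hs : support (A i) ⊆ s)
    (B : ℕ → ℕ → R) (k : ℕ) : fMul A B i k = ∑ j ∈ s, A i j * B j k :=
  finsum_eq_sum_of_support_subset _ ((support_mul_subset_left _ _).trans hs)

theorem RowFinite.support_subset {A : ℕ → ℕ → R} (hA : RowFinite A) (i : ℕ) :
    support (A i) ⊆ (hA i).toFinset :=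
  (hA i).coe_toFinset.symm.subset

theorem fMul_assoc {A B : ℕ → ℕ → R} (hA : RowFinite A) (hB : RowFinite B) (C : ℕ → ℕ → R) :
    fMul A (fMul B C) = fMul (fMul A B) C := by
  funext i k
  set S := (hA i).toFinset
  set T := S.biUnion fun j => (hB j).toFinset
  have hT : ∀ j ∈ S, support (B j) ⊆ T := fun j hj l hl =>
    mem_biUnion.2 ⟨j, hj, (hB j).mem_toFinset.2 hl⟩
  have hAB : support (fMul A B i) ⊆ T := by
    intro l hl
    by_contra hlT
    refine hl (?_ : fMul A B i l = 0)
    rw [fMul_apply_eq_sum (hA.support_subset i)]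
    refine sum_eq_zero fun j hj => ?_
    rw [notMem_support.1 fun h => hlT (hT j hj h), mul_zero]
  calc fMul A (fMul B C) i k = ∑ j ∈ S, ∑ l ∈ T, A i j * (B j l * C l k) := by
        rw [fMul_apply_eq_sum (hA.support_subset i)]
        exact sum_congr rfl fun j hj => by rw [fMul_apply_eq_sum (hT j hj), mul_sum]
    _ = ∑ l ∈ T, (∑ j ∈ S, A i j * B j l) * C l k := by
        rw [sum_comm]
        simp only [sum_mul, mul_assoc]
    _ = fMul (fMul A B) C i k := by
        rw [fMul_apply_eq_sum hAB]
        exact sum_congr rfl fun l _ => by rw [fMul_apply_eq_sum (hA.support_subset i)]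

theorem fMul_add {A : ℕ → ℕ → R} (hA : RowFinite A) (B C : ℕ → ℕ → R) :
    fMul A (B + C) = fMul A B + fMul A C := by
  funext i k
  simp only [Pi.add_apply, fMul_apply_eq_sum (hA.support_subset i), mul_add, sum_add_distrib]

theorem fMul_smul {A : ℕ → ℕ → R} (hA : RowFinite A) (c : R) (B : ℕ → ℕ → R) :
    fMul A (c • B) = c • fMul A B := by
  funext i k
  simp only [Pi.smul_apply, smul_eq_mul, fMul_apply_eq_sum (hA.support_subset i), mul_sum]
  exact sum_congr rfl fun j _ => by ring

theorem one_fMul (B : ℕ → ℕ → R) : fMul (fun i j => if i = j then 1 else 0) B = B := by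
  funext i k
  exact (finsum_eq_single _ i fun j hj => by simp [Ne.symm hj]).trans (by simp)

theorem fMul_one (A : ℕ → ℕ → R) : fMul A (fun i j => if i = j then 1 else 0) = A := by
  funext i k
  exact (finsum_eq_single _ k fun j hj => by simp [hj]).trans (by simp)

theorem fMul_left_inv_eq_right_inv {L A A' : ℕ → ℕ → R} (hL : RowFinite L) (hA : RowFinite A)
    (hLA : fMul L A = fun i j => if i = j then 1 else 0)
    (hAA' : fMul A A' = fun i j => if i = j then 1 else 0) : L = A' := by
  rw [← fMul_one L, ← hAA', fMul_assoc hL hA, hLA, one_fMul]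

def shiftMatrix : ℕ → ℕ → R := fun i j => if j = i + 1 then 1 else 0

theorem shiftMatrix_rowFinite : RowFinite (shiftMatrix : ℕ → ℕ → R) := fun i =>
  (Set.finite_singleton (i + 1)).subset fun j hj => by
    by_contra h
    exact hj (if_neg h)

theorem shiftMatrix_fMul (B : ℕ → ℕ → R) : fMul shiftMatrix B = fun i k => B (i + 1) k := by
  funext i k
  exact (finsum_eq_single _ (i + 1) fun j hj => by simp [shiftMatrix, hj]).trans
    (by simp [shiftMatrix])

theorem fMul_shiftMatrix_zero (A : ℕ → ℕ → R) (i : ℕ) : fMul A shiftMatrix i 0 = 0 :=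
  finsum_eq_zero_of_forall_eq_zero fun j => by simp [shiftMatrix]

theorem fMul_shiftMatrix_succ (A : ℕ → ℕ → R) (i k : ℕ) :
    fMul A shiftMatrix i (k + 1) = A i k :=
  (finsum_eq_single _ k fun j hj => by simp [shiftMatrix, Ne.symm hj]).trans
    (by simp [shiftMatrix])

theorem fMul_bidiagonal_apply (X : ℕ → ℕ → R) (x : R) (i k : ℕ) :
    fMul X (fun i j => if i = j then 1 else if i = j + 1 then x else 0) i k
      = X i k + x * X i (k + 1) := by
  rw [fMul, finsum_eq_sum_of_support_subset (s := {k, k + 1})]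
  · simp [sum_pair (show k ≠ k + 1 by omega), mul_comm]
  · intro j hj
    by_contra h
    simp only [coe_insert, coe_singleton, Set.mem_insert_iff, Set.mem_singleton_iff, not_or] at h
    simp [h.1, h.2] at hj

theorem fMul_shiftMatrix_fMul_bidiagonal (A : ℕ → ℕ → R) (x : R) :
    fMul (fMul A shiftMatrix) (fun i j => if i = j then 1 else if i = j + 1 then x else 0)
      = fMul A shiftMatrix + x • A := by
  funext i k
  rw [fMul_bidiagonal_apply, fMul_shiftMatrix_succ]
  rfl

/-- The exponential Riordan array `[a(t), t]` with `a(t) = ∑ aₘ tᵐ / m!`: on exponential generating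
functions it is multiplication by `a(t)`, and `binomialConv` multiplies these series. -/
def appellMatrix (a : ℕ → R) : ℕ → ℕ → R := fun n k => n.choose k * a (n - k)

def binomialConv (a b : ℕ → R) : ℕ → R :=
  fun m => ∑ i ∈ range (m + 1), a i * b (m - i) * m.choose i

theorem appellMatrix_of_lt (a : ℕ → R) {n k : ℕ} (h : n < k) : appellMatrix a n k = 0 := by
  simp [appellMatrix, Nat.choose_eq_zero_of_lt h]

theorem support_appellMatrix_subset (a : ℕ → R) (n : ℕ) :
    support (appellMatrix a n) ⊆ range (n + 1) := fun k hk => by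
  by_contra h
  exact hk (appellMatrix_of_lt a (by simpa using h))

theorem appellMatrix_rowFinite (a : ℕ → R) : RowFinite (appellMatrix a) := fun n =>
  (range (n + 1)).finite_toSet.subset (support_appellMatrix_subset a n)

theorem appellMatrix_fMul (a b : ℕ → R) :
    fMul (appellMatrix a) (appellMatrix b) = appellMatrix (binomialConv b a) := by
  funext n k
  rw [fMul_apply_eq_sum (support_appellMatrix_subset a n)]
  rcases le_or_gt k n with hk | hk
  · obtain ⟨m, rfl⟩ := Nat.exists_eq_add_of_le hk
    rw [show k + m + 1 = k + (m + 1) by omega, sum_range_add,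
      sum_eq_zero fun j hj => by rw [appellMatrix_of_lt b (mem_range.1 hj), mul_zero], zero_add,
      appellMatrix, binomialConv, add_tsub_cancel_left, mul_sum]
    refine sum_congr rfl fun t ht => ?_
    have hchoose := Nat.choose_mul (n := k + m) (k := k + t) (Nat.le_add_right k t)
    rw [add_tsub_cancel_left, add_tsub_cancel_left] at hchoose
    simp only [appellMatrix, add_tsub_cancel_left, show k + m - (k + t) = m - t by omega]
    have hchooseR :
        ((k + m).choose (k + t) : R) * (k + t).choose k = (k + m).choose k * m.choose t := by
      rw [← Nat.cast_mul, ← Nat.cast_mul, hchoose]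
    linear_combination (a (m - t) * b t) * hchooseR
  · rw [appellMatrix_of_lt _ hk]
    exact sum_eq_zero fun j hj => by
      rw [appellMatrix_of_lt b (by simp at hj; omega), mul_zero]

theorem binomialConv_comm (a b : ℕ → R) : binomialConv a b = binomialConv b a := by
  funext m
  rw [binomialConv, binomialConv, ← sum_range_reflect]
  refine sum_congr rfl fun i hi => ?_
  have hi : i ≤ m := by simpa [Nat.lt_succ_iff] using hi
  rw [add_tsub_cancel_right, Nat.sub_sub_self hi, Nat.choose_symm hi]
  ring

theorem appellMatrix_fMul_comm (a b : ℕ → R) :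
    fMul (appellMatrix a) (appellMatrix b) = fMul (appellMatrix b) (appellMatrix a) := by
  rw [appellMatrix_fMul, appellMatrix_fMul, binomialConv_comm]

theorem binomialConv_pow (x y : R) : binomialConv (x ^ ·) (y ^ ·) = ((x + y) ^ ·) := by
  funext m
  exact (add_pow x y m).symm

theorem appellMatrix_zero_pow :
    appellMatrix (fun m => (0 : R) ^ m) = fun i j => if i = j then 1 else 0 := by
  funext n k
  rcases lt_trichotomy n k with h | rfl | h
  · simp [appellMatrix_of_lt _ h, h.ne]
  · simp [appellMatrix]
  · simp [appellMatrix, h.ne', Nat.sub_ne_zero_of_lt h]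

-- Leibniz's rule `(a g)' = a g' + a' g`, with `shiftMatrix` acting as `d/dt`.
theorem shiftMatrix_fMul_appellMatrix (a : ℕ → R) :
    fMul shiftMatrix (appellMatrix a)
      = fMul (appellMatrix a) shiftMatrix + appellMatrix (fun m => a (m + 1)) := by
  funext n k
  simp only [shiftMatrix_fMul, Pi.add_apply]
  rcases k with _ | k
  · simp [fMul_shiftMatrix_zero, appellMatrix]
  · rw [fMul_shiftMatrix_succ]
    simp only [appellMatrix, Nat.choose_succ_succ', Nat.add_sub_add_right, Nat.cast_add]
    rcases lt_or_ge k n with h | h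
    · rw [show n - (k + 1) + 1 = n - k by omega]
      ring
    · rw [Nat.choose_eq_zero_of_lt (by omega : n < k + 1)]
      ring

theorem appellMatrix_shiftMatrix_conj (f : ℕ → R) (x : R) :
    fMul (fMul (appellMatrix f) shiftMatrix) (appellMatrix (x ^ ·))
      = fMul (appellMatrix (x ^ ·))
          (fMul (fMul (appellMatrix f) shiftMatrix)
            (fun i j => if i = j then 1 else if i = j + 1 then x else 0)) := by
  set F := appellMatrix f
  set E := appellMatrix (x ^ ·)
  have hF : RowFinite F := appellMatrix_rowFinite f
  have hE : RowFinite E := appellMatrix_rowFinite _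
  have hLeibniz : fMul shiftMatrix E = fMul E shiftMatrix + x • E := by
    rw [shiftMatrix_fMul_appellMatrix]
    congr 1
    funext n k
    simp only [E, appellMatrix, Pi.smul_apply, smul_eq_mul, pow_succ]
    ring
  calc fMul (fMul F shiftMatrix) E = fMul F (fMul E shiftMatrix + x • E) := by
        rw [← fMul_assoc hF shiftMatrix_rowFinite, hLeibniz]
    _ = fMul (fMul E F) shiftMatrix + x • fMul E F := by
        rw [fMul_add hF, fMul_smul hF, fMul_assoc hF hE, appellMatrix_fMul_comm]
    _ = fMul E (fMul F shiftMatrix + x • F) := by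
        rw [fMul_add hE, fMul_smul hE, fMul_assoc hE hF]
    _ = _ := by rw [fMul_shiftMatrix_fMul_bidiagonal]

end

theorem BxInv_P_Bx_general {R : Type*} [CommRing R] (φ : ℕ → R) (x : R)
    (P : ℕ → ℕ → R)
    (hP : ∀ i j : ℕ, P i j =
      if 1 ≤ j ∧ j ≤ i + 1 then (Nat.descFactorial i (i - (j - 1)) : R) * φ (i + 1 - j)
      else 0)
    (Bx : ℕ → ℕ → R) (hBx : ∀ n k : ℕ, Bx n k = (Nat.choose n k : R) * x ^ (n - k))
    (Bxinv : ℕ → ℕ → R)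
    (hinv₂ : fMul Bx Bxinv = fun i j => if i = j then 1 else 0) :
    fMul Bxinv (fMul P Bx)
      = fMul P (fun i j => if i = j then 1 else if i = j + 1 then x else 0) := by
  have hBx' : Bx = appellMatrix (x ^ ·) := funext fun n => funext (hBx n)
  have hP' : P = fMul (appellMatrix fun m => (m.factorial : R) * φ m) shiftMatrix := by
    funext i j
    rcases j with _ | k
    · simp [hP, fMul_shiftMatrix_zero]
    · rw [hP, fMul_shiftMatrix_succ, appellMatrix, add_tsub_cancel_right,
        Nat.add_sub_add_right]
      rcases le_or_gt k i with hk | hk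
      · rw [if_pos (by omega), Nat.descFactorial_eq_factorial_mul_choose, Nat.choose_symm hk]
        push_cast
        ring
      · rw [if_neg (by omega), Nat.choose_eq_zero_of_lt hk, Nat.cast_zero, zero_mul]
  have hinv : appellMatrix ((-x) ^ ·) = Bxinv := by
    refine fMul_left_inv_eq_right_inv (appellMatrix_rowFinite _) (appellMatrix_rowFinite _)
      ?_ (hBx' ▸ hinv₂)
    rw [appellMatrix_fMul, binomialConv_pow, add_neg_cancel, appellMatrix_zero_pow]
  rw [← hinv, hP', hBx', appellMatrix_shiftMatrix_conj,
    fMul_assoc (appellMatrix_rowFinite _) (appellMatrix_rowFinite _), appellMatrix_fMul,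
    binomialConv_pow, add_neg_cancel, appellMatrix_zero_pow, one_fMul]

/-- Let `φ = (φ_i)` and `x` be indeterminates (here: arbitrary elements of a
commutative ring).  Let `P` be the lower-Hessenberg matrix with
`p_{ij} = (i!/(j-1)!) φ_{i-j+1}` for `1 ≤ j ≤ i+1` and `p_{ij} = 0` otherwise,
and let `B_x` be the binomial matrix `(B_x)_{nk} = binomial(n,k) x^{n-k}`
(unit-lower-triangular, hence invertible).  If `Bxinv` is a two-sided inverse of
`B_x`, then `B_x⁻¹ P B_x = P (I + x Δᵀ)`, where `Δᵀ` is the matrix with 1's on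
the subdiagonal and 0 elsewhere. -/
theorem BxInv_P_Bx {R : Type*} [CommRing R] (φ : ℕ → R) (x : R)
    (P : ℕ → ℕ → R)
    (hP : ∀ i j : ℕ, P i j =
      if 1 ≤ j ∧ j ≤ i + 1 then (Nat.descFactorial i (i - (j - 1)) : R) * φ (i + 1 - j)
      else 0)
    (Bx : ℕ → ℕ → R) (hBx : ∀ n k : ℕ, Bx n k = (Nat.choose n k : R) * x ^ (n - k))
    (Bxinv : ℕ → ℕ → R)
    (hinv₁ : fMul Bxinv Bx = fun i j => if i = j then 1 else 0)
    (hinv₂ : fMul Bx Bxinv = fun i j => if i = j then 1 else 0) :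
    fMul Bxinv (fMul P Bx)
      = fMul P (fun i j => if i = j then 1 else if i = j + 1 then x else 0) :=
  BxInv_P_Bx_general φ x P hP Bx hBx Bxinv hinv₂
end
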